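/- Let a < b be two positive integers and let G be a finite simple graph of order n with n ≥ 2(a+b)(a+b−1)/a and minimum degree δ(G) ≥ ((a+b−1)² + 4b)/(4a). If |N_G(u) ∪ N_G(v)| ≥ bn/(a+b) for every pair of nonadjacent vertices u and v of G, then G has all fractional [a,b]-factors. -/

import Mathlib

open Finset

/-- The degree of `v` in the induced subgraph `G − S` (on `V(G) \ S`), i.e. the number of
neighbors of `v` in `G` that lie outside `S`. -/
def dOut {V : Type*} [Fintype V] [DecidableEq V] (G : SimpleGraph V) [DecidableRel G.Adj]
    (S : Finset V) (v : V) : ℕ :=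
  (G.neighborFinset v \ S).card

/-- `Tset G f S = {v ∈ V(G) − S : d_{G−S}(v) < f v}`. -/
def Tset {V : Type*} [Fintype V] [DecidableEq V] (G : SimpleGraph V) [DecidableRel G.Adj]
    (f : V → ℕ) (S : Finset V) : Finset V :=
  Sᶜ.filter fun v => dOut G S v < f v

/-- `h` is (the indicator function of) a fractional `(g,f)`-factor of `G`:
`0 ≤ h(e) ≤ 1` on every edge and `g x ≤ Σ_{e ∋ x} h e ≤ f x` for every vertex `x`. -/
def IsFracFactor {V : Type*} [Fintype V] [DecidableEq V] (G : SimpleGraph V)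
    [DecidableRel G.Adj] (g f : V → ℕ) (h : Sym2 V → ℝ) : Prop :=
  (∀ e ∈ G.edgeFinset, 0 ≤ h e ∧ h e ≤ 1) ∧
  ∀ x : V, (g x : ℝ) ≤ ∑ e ∈ G.incidenceFinset x, h e ∧
    ∑ e ∈ G.incidenceFinset x, h e ≤ (f x : ℝ)

/-- `G` has all fractional `(g,f)`-factors: for every `q : V → ℕ` with `g ≤ q ≤ f`
pointwise, `G` has a fractional `q`-factor (a fractional `(q,q)`-factor). -/
def HasAllFracFactors {V : Type*} [Fintype V] [DecidableEq V] (G : SimpleGraph V)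
    [DecidableRel G.Adj] (g f : V → ℕ) : Prop :=
  ∀ q : V → ℕ, (∀ v, g v ≤ q v) → (∀ v, q v ≤ f v) → ∃ h, IsFracFactor G q q h

/-!
Write `d(v)` for the degree of `v` in `G - S` and `T` for the vertices outside `S` with
`d(v) < b`. If `∑_{v ∈ T} (b - d(v)) ≤ a|S|` for every `S`, then `G` has all fractional
`[a,b]`-factors: for `a ≤ q ≤ b` this inequality yields Gale's condition for a flow with supplies
and demands `q` in the bipartite double cover of `G`, and symmetrising that flow gives a
fractional `q`-factor. Gale's supply–demand theorem itself follows by taking a flow of maximal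
value: the sinks unreachable in its residual network form a cut violating Gale's condition
unless every demand is met.

Suppose the inequality fails for `S`, and let `v₁ ∈ T` minimise `d`. If `T` lies in the closed
neighbourhood of `v₁`, then `|T| ≤ d(v₁) + 1`, and with `δ(G) ≤ d(v₁) + |S|` the failure becomes
a quadratic inequality in `d(v₁)` excluded by the bound on `δ(G)`. Otherwise let `v₂` minimise
`d` on the rest of `T`; as `v₁, v₂` are nonadjacent, `bn/(a+b) ≤ |S| + d(v₁) + d(v₂)`, and
together with the bound on `n` this yields two quadratic inequalities in `d(v₁) ≤ d(v₂)` that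
cannot hold simultaneously.
-/

section Transport

open Filter Topology

variable {ι κ : Type*} [Fintype ι] [Fintype κ]

def residualAdj (c g : ι → κ → ℝ) : ι ⊕ κ → ι ⊕ κ → Prop
  | .inl i, .inr j => g i j < c i j
  | .inr j, .inl i => 0 < g i j
  | _, _ => False

def IsFeasibleDirection (c g φ : ι → κ → ℝ) : Prop :=
  ∀ i j, (g i j = 0 → 0 ≤ φ i j) ∧ (g i j = c i j → φ i j ≤ 0)

lemma IsFeasibleDirection.eventually_mem_box {c g φ : ι → κ → ℝ}
    (hφ : IsFeasibleDirection c g φ) (hg : ∀ i j, 0 ≤ g i j ∧ g i j ≤ c i j) :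
    ∀ᶠ θ in 𝓝[>] (0 : ℝ), ∀ i j, 0 ≤ (g + θ • φ) i j ∧ (g + θ • φ) i j ≤ c i j := by
  refine eventually_all.2 fun i => eventually_all.2 fun j => ?_
  have hlim : Tendsto (fun θ : ℝ => g i j + θ * φ i j) (𝓝[>] 0) (𝓝 (g i j)) := by
    refine tendsto_nhdsWithin_of_tendsto_nhds ?_
    have hcont : Continuous fun θ : ℝ => g i j + θ * φ i j := by fun_prop
    simpa using hcont.tendsto 0
  have hpos : ∀ᶠ θ in 𝓝[>] (0 : ℝ), 0 < θ := self_mem_nhdsWithin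
  have hlow : ∀ᶠ θ in 𝓝[>] (0 : ℝ), 0 ≤ g i j + θ * φ i j := by
    rcases (hg i j).1.eq_or_lt with h | h
    · filter_upwards [hpos] with θ hθ
      rw [← h, zero_add]
      exact mul_nonneg hθ.le ((hφ i j).1 h.symm)
    · exact (hlim.eventually (lt_mem_nhds h)).mono fun _ => le_of_lt
  have hup : ∀ᶠ θ in 𝓝[>] (0 : ℝ), g i j + θ * φ i j ≤ c i j := by
    rcases (hg i j).2.eq_or_lt with h | h
    · filter_upwards [hpos] with θ hθ
      have := mul_nonpos_of_nonneg_of_nonpos hθ.le ((hφ i j).2 h)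
      linarith
    · exact (hlim.eventually (gt_mem_nhds h)).mono fun _ => le_of_lt
  filter_upwards [hlow, hup] with θ h0 hc
  simpa using ⟨h0, hc⟩

/-- `φ` counts the arcs of the walk, forward arcs positively and backward arcs negatively. -/
lemma exists_isFeasibleDirection_of_reflTransGen [DecidableEq ι] [DecidableEq κ]
    {c g : ι → κ → ℝ} {i₀ : ι} {x : ι ⊕ κ}
    (hx : Relation.ReflTransGen (residualAdj c g) (.inl i₀) x) :
    ∃ φ, IsFeasibleDirection c g φ ∧
      (∀ i, ∑ j, φ i j = (if i₀ = i then 1 else 0) - (if x = .inl i then 1 else 0)) ∧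
      (∀ j, ∑ i, φ i j = if x = .inr j then 1 else 0) := by
  induction hx with
  | refl => exact ⟨0, fun _ _ => by simp, fun i => by simp, fun j => by simp⟩
  | @tail y z _ hyz ih =>
    obtain ⟨φ, hφ, hrow, hcol⟩ := ih
    match y, z, hyz with
    | .inl i, .inr j, (hij : g i j < c i j) =>
      refine ⟨fun p r => φ p r + if i = p ∧ j = r then 1 else 0, fun p r => ?_, fun p => ?_,
        fun r => ?_⟩
      · by_cases h : i = p ∧ j = r
        · obtain ⟨rfl, rfl⟩ := h
          simp only [and_self, if_true]
          exact ⟨fun h0 => by linarith [(hφ i j).1 h0], fun h => absurd h hij.ne⟩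
        · simpa [h] using hφ p r
      · by_cases hp : i = p <;> simp [sum_add_distrib, hrow, hp]
      · simp [sum_add_distrib, hcol, ite_and]
    | .inr j, .inl i, (hij : 0 < g i j) =>
      refine ⟨fun p r => φ p r - if i = p ∧ j = r then 1 else 0, fun p r => ?_, fun p => ?_,
        fun r => ?_⟩
      · by_cases h : i = p ∧ j = r
        · obtain ⟨rfl, rfl⟩ := h
          simp only [and_self, if_true]
          exact ⟨fun h => absurd h hij.ne', fun h0 => by linarith [(hφ i j).2 h0]⟩
        · simpa [h] using hφ p r
      · simp [sum_sub_distrib, hrow, ite_and]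
      · by_cases hr : j = r <;> simp [sum_sub_distrib, hcol, hr]

def IsFeasibleFlow (c : ι → κ → ℝ) (s : ι → ℝ) (t : κ → ℝ) (g : ι → κ → ℝ) : Prop :=
  (∀ i j, 0 ≤ g i j ∧ g i j ≤ c i j) ∧ (∀ i, ∑ j, g i j ≤ s i) ∧ ∀ j, ∑ i, g i j ≤ t j

lemma isCompact_setOf_isFeasibleFlow (c : ι → κ → ℝ) (s : ι → ℝ) (t : κ → ℝ) :
    IsCompact {g | IsFeasibleFlow c s t g} := by
  have hcont : ∀ i j, Continuous fun g : ι → κ → ℝ => g i j := fun i j => by fun_prop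
  have hclosed : IsClosed {g | IsFeasibleFlow c s t g} := by
    simp only [IsFeasibleFlow, Set.ofPred_and, Set.ofPred_forall]
    exact (isClosed_iInter fun i => isClosed_iInter fun j =>
        (isClosed_le continuous_const (hcont i j)).inter
          (isClosed_le (hcont i j) continuous_const)).inter
      ((isClosed_iInter fun i =>
        isClosed_le (continuous_finsetSum _ fun j _ => hcont i j) continuous_const).inter
      (isClosed_iInter fun j =>
        isClosed_le (continuous_finsetSum _ fun i _ => hcont i j) continuous_const))
  exact isCompact_Icc.of_isClosed_subset hclosed fun g hg => ⟨fun i j => (hg.1 i j).1,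
    fun i j => (hg.1 i j).2⟩

lemma exists_isFeasibleFlow_forall_total_le {c : ι → κ → ℝ} {s : ι → ℝ} {t : κ → ℝ}
    (hc : ∀ i j, 0 ≤ c i j) (hs : ∀ i, 0 ≤ s i) (ht : ∀ j, 0 ≤ t j) :
    ∃ g, IsFeasibleFlow c s t g ∧
      ∀ g', IsFeasibleFlow c s t g' → ∑ i, ∑ j, g' i j ≤ ∑ i, ∑ j, g i j := by
  have h0 : IsFeasibleFlow c s t 0 := ⟨fun i j => ⟨le_rfl, hc i j⟩, fun i => by simpa using hs i,
    fun j => by simpa using ht j⟩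
  obtain ⟨g, hg, hmax⟩ := (isCompact_setOf_isFeasibleFlow c s t).exists_isMaxOn ⟨0, h0⟩
    (by fun_prop : Continuous fun g : ι → κ → ℝ => ∑ i, ∑ j, g i j).continuousOn
  exact ⟨g, hg, fun g' hg' => hmax hg'⟩

/-- Otherwise a little more could be pushed along the walk. -/
lemma sum_eq_of_reflTransGen_of_forall_total_le [DecidableEq ι] [DecidableEq κ]
    {c : ι → κ → ℝ} {s : ι → ℝ} {t : κ → ℝ} {g : ι → κ → ℝ} (hg : IsFeasibleFlow c s t g)
    (hmax : ∀ g', IsFeasibleFlow c s t g' → ∑ i, ∑ j, g' i j ≤ ∑ i, ∑ j, g i j)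
    {i₀ : ι} (hi₀ : ∑ j, g i₀ j < s i₀) {j₀ : κ}
    (hreach : Relation.ReflTransGen (residualAdj c g) (.inl i₀) (.inr j₀)) :
    ∑ i, g i j₀ = t j₀ := by
  refine (hg.2.2 j₀).antisymm (not_lt.1 fun hj₀ => ?_)
  obtain ⟨φ, hφ, hrow, hcol⟩ := exists_isFeasibleDirection_of_reflTransGen hreach
  have hs : ∀ᶠ θ in 𝓝[>] (0 : ℝ), θ ∈ Set.Ioo 0 (s i₀ - ∑ j, g i₀ j) :=
    Ioo_mem_nhdsGT (sub_pos.2 hi₀)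
  have ht : ∀ᶠ θ in 𝓝[>] (0 : ℝ), θ ∈ Set.Ioo 0 (t j₀ - ∑ i, g i j₀) :=
    Ioo_mem_nhdsGT (sub_pos.2 hj₀)
  obtain ⟨θ, hbox, ⟨hθ, hθs⟩, -, hθt⟩ := ((hφ.eventually_mem_box hg.1).and (hs.and ht)).exists
  have hrow' : ∀ i, ∑ j, (g + θ • φ) i j = ∑ j, g i j + θ * (if i₀ = i then 1 else 0) := by
    intro i
    simp [sum_add_distrib, ← mul_sum, hrow]
  have hcol' : ∀ j, ∑ i, (g + θ • φ) i j = ∑ i, g i j + θ * (if j₀ = j then 1 else 0) := by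
    intro j
    simp [sum_add_distrib, ← mul_sum, hcol]
  have hfeas : IsFeasibleFlow c s t (g + θ • φ) := by
    refine ⟨hbox, fun i => ?_, fun j => ?_⟩
    · rw [hrow']
      split_ifs with h
      · subst h; linarith
      · simpa using hg.2.1 i
    · rw [hcol']
      split_ifs with h
      · subst h; linarith
      · simpa using hg.2.2 j
  have htotal := hmax _ hfeas
  simp only [hrow', sum_add_distrib, ← mul_sum, sum_ite_eq, mem_univ, if_true, mul_one] at htotal
  linarith

/-- Gale's supply–demand theorem. -/
theorem exists_isFeasibleFlow_sum_eq_of_forall_sum_le {c : ι → κ → ℝ} {s : ι → ℝ} {t : κ → ℝ}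
    (hc : ∀ i j, 0 ≤ c i j) (hs : ∀ i, 0 ≤ s i) (ht : ∀ j, 0 ≤ t j)
    (hgale : ∀ T : Finset κ, ∑ j ∈ T, t j ≤ ∑ i, min (s i) (∑ j ∈ T, c i j)) :
    ∃ g, IsFeasibleFlow c s t g ∧ ∀ j, ∑ i, g i j = t j := by
  classical
  obtain ⟨g, hg, hmax⟩ := exists_isFeasibleFlow_forall_total_le hc hs ht
  refine ⟨g, hg, fun j₀ => (hg.2.2 j₀).antisymm (not_lt.1 fun hj₀ => ?_)⟩
  let Reach (x : ι ⊕ κ) : Prop :=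
    ∃ i₀, ∑ j, g i₀ j < s i₀ ∧ Relation.ReflTransGen (residualAdj c g) (.inl i₀) x
  have hsat : ∀ j, Reach (.inr j) → ∑ i, g i j = t j := fun j ⟨i₀, hi₀, hreach⟩ =>
    sum_eq_of_reflTransGen_of_forall_total_le hg hmax hi₀ hreach
  let T := univ.filter fun j => ¬ Reach (.inr j)
  have hj₀T : j₀ ∈ T := by
    simp only [T, mem_filter, mem_univ, true_and]
    exact fun h => hj₀.ne (hsat j₀ h)
  have hmin : ∀ i, min (s i) (∑ j ∈ T, c i j) ≤ ∑ j ∈ T, g i j := by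
    intro i
    by_cases hi : Reach (.inl i)
    · refine (min_le_right _ _).trans_eq (sum_congr rfl fun j hj => ?_)
      refine ((hg.1 i j).2.antisymm (not_lt.1 fun hlt => ?_)).symm
      obtain ⟨i₀, hi₀, hreach⟩ := hi
      exact (mem_filter.1 hj).2 ⟨i₀, hi₀, hreach.tail (show g i j < c i j from hlt)⟩
    · have hrow : ∑ j, g i j = s i :=
        (hg.2.1 i).antisymm (not_lt.1 fun hlt => hi ⟨i, hlt, .refl⟩)
      have hzero : ∑ j ∈ Tᶜ, g i j = 0 := by
        refine sum_eq_zero fun j hj => ((hg.1 i j).1.antisymm (not_lt.1 fun hpos => ?_)).symm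
        obtain ⟨i₀, hi₀, hreach⟩ : Reach (.inr j) := by simpa [T] using hj
        exact hi ⟨i₀, hi₀, hreach.tail (show 0 < g i j from hpos)⟩
      refine (min_le_left _ _).trans_eq ?_
      rw [← hrow, ← sum_add_sum_compl T, hzero, add_zero]
  have hlt : ∑ j ∈ T, ∑ i, g i j < ∑ j ∈ T, t j :=
    sum_lt_sum (fun j _ => hg.2.2 j) ⟨j₀, hj₀T, hj₀⟩
  have hle := (hgale T).trans (sum_le_sum fun i _ => hmin i)
  rw [sum_comm] at hle
  linarith

end Transport

lemma sum_sub_le_card_mul_sub {α : Type*} {U : Finset α} {f : α → ℕ} {c : ℕ} (b : ℝ)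
    (hc : ∀ v ∈ U, c ≤ f v) : ∑ v ∈ U, (b - f v) ≤ #U * (b - c) := by
  refine (sum_le_card_nsmul U _ _ fun v hv => ?_).trans_eq (nsmul_eq_mul _ _)
  have : (c : ℝ) ≤ f v := by exact_mod_cast hc v hv
  linarith

lemma closedNbhd_case_arith {a b s d k δ : ℝ} (ha : 0 < a) (hdb : d ≤ b)
    (hδ : δ ≥ ((a + b - 1) ^ 2 + 4 * b) / (4 * a)) (hδs : δ ≤ d + s) (hk : k ≤ d + 1)
    (hdef : a * s + 1 ≤ k * (b - d)) : False := by
  rw [ge_iff_le, div_le_iff₀ (by positivity)] at hδ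
  nlinarith [sq_nonneg (a + b - 1 - 2 * d), mul_le_mul_of_nonneg_right hk (sub_nonneg.2 hdb)]

lemma two_vertex_case_arith {a b n s d₁ d₂ k w : ℝ} (ha : 1 ≤ a) (hab : a + 1 ≤ b)
    (hd₁ : d₁ = 0 ∨ 1 ≤ d₁) (hd₁₂ : d₁ ≤ d₂) (hd₂ : d₂ + 1 ≤ b)
    (hn : n ≥ 2 * (a + b) * (a + b - 1) / a) (hunion : s + d₁ + d₂ ≥ b * n / (a + b))
    (hk : k ≤ d₁ + 1) (hw : 0 ≤ w) (hkw : s + k + w ≤ n)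
    (hdef : a * s + 1 ≤ k * (b - d₁) + w * (b - d₂)) : False := by
  have hab0 : 0 < a + b := by linarith
  rw [ge_iff_le, div_le_iff₀ (by linarith)] at hn
  rw [ge_iff_le, div_le_iff₀ hab0] at hunion
  have hd₁0 : 0 ≤ d₁ := by rcases hd₁ with h | h <;> linarith
  have hE₁ : a * s + 1 ≤ (n - s) * (b - d₁) := by
    nlinarith [mul_le_mul_of_nonneg_left hd₁₂ hw]
  have hE₂ : a * s + 1 ≤ (n - s) * (b - d₂) + (d₁ + 1) * (d₂ - d₁) := by
    nlinarith [mul_le_mul_of_nonneg_right hk (sub_nonneg.2 hd₁₂)]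
  -- multiply `hE₁`, `hE₂` by `a + b` and eliminate `s` with `hunion`: `n` survives only in
  -- the term `a * n * dᵢ`, which `hn` bounds from below
  have hA₁ : 2 * (a + b - 1) * d₁ + 1 ≤ (d₁ + d₂) * (a + b - d₁) := by
    refine le_of_mul_le_mul_left ?_ hab0
    nlinarith [mul_le_mul_of_nonneg_right hunion (by linarith : 0 ≤ a + b - d₁),
      mul_le_mul_of_nonneg_right hn hd₁0]
  have hA₂ : 2 * (a + b - 1) * d₂ + 1 ≤ (d₁ + d₂) * (a + b - d₂) + (d₁ + 1) * (d₂ - d₁) := by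
    refine le_of_mul_le_mul_left ?_ hab0
    nlinarith [mul_le_mul_of_nonneg_right hunion (by linarith : 0 ≤ a + b - d₂),
      mul_le_mul_of_nonneg_right hn (hd₁0.trans hd₁₂)]
  rcases hd₁ with rfl | h
  · nlinarith [mul_nonneg (hd₁0.trans hd₁₂) (by linarith : (0:ℝ) ≤ a + b - 3)]
  · nlinarith [mul_nonneg (sub_nonneg.2 hd₁₂) (by linarith : (0:ℝ) ≤ d₂ - 1),
      mul_nonneg (by linarith : (0:ℝ) ≤ d₁ + d₂) (by linarith : (0:ℝ) ≤ 2 * d₁ - 2)]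

section FractionalFactor

variable {V : Type*} [Fintype V] [DecidableEq V] (G : SimpleGraph V) [DecidableRel G.Adj]

lemma sum_incidenceFinset_eq_sum_neighborFinset {M : Type*} [AddCommMonoid M]
    (f : Sym2 V → M) (x : V) :
    ∑ e ∈ G.incidenceFinset x, f e = ∑ w ∈ G.neighborFinset x, f s(x, w) := by
  have himage : G.incidenceFinset x = (G.neighborFinset x).image (s(x, ·)) := by
    ext e
    induction e with
    | h u v =>
      simp only [SimpleGraph.mem_incidenceFinset, SimpleGraph.incidenceSet, Set.mem_ofPred_eq,
        SimpleGraph.mem_edgeSet, Sym2.mem_iff, mem_image, SimpleGraph.mem_neighborFinset,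
        Sym2.eq_iff]
      constructor
      · rintro ⟨hadj, rfl | rfl⟩
        · exact ⟨v, hadj, .inl ⟨rfl, rfl⟩⟩
        · exact ⟨u, hadj.symm, .inr ⟨rfl, rfl⟩⟩
      · rintro ⟨w, hw, ⟨rfl, rfl⟩ | ⟨rfl, rfl⟩⟩
        · exact ⟨hw, .inl rfl⟩
        · exact ⟨hw.symm, .inr rfl⟩
  rw [himage, sum_image fun _ _ _ _ h => Sym2.congr_right.1 h]

/-- `g` is a flow in the bipartite double cover of `G`; averaging it over the two orientations
of each edge gives the factor. -/
lemma exists_isFracFactor_of_sum_eq (q : V → ℕ) {g : V → V → ℝ} (hg0 : ∀ u v, 0 ≤ g u v)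
    (hg1 : ∀ u v, g u v ≤ if G.Adj u v then 1 else 0)
    (hrow : ∀ u, ∑ v, g u v = q u) (hcol : ∀ v, ∑ u, g u v = q v) :
    ∃ h, IsFracFactor G q q h := by
  have hzero : ∀ u v, g u v ≠ 0 → G.Adj u v := fun u v hne => by
    by_contra hadj
    exact hne ((hg1 u v).trans_eq (if_neg hadj) |>.antisymm (hg0 u v))
  have hrow' : ∀ x, ∑ w ∈ G.neighborFinset x, g x w = q x := fun x => by
    rw [G.neighborFinset_eq_filter, sum_filter_of_ne fun w _ => hzero x w, hrow]
  have hcol' : ∀ x, ∑ w ∈ G.neighborFinset x, g w x = q x := fun x => by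
    rw [G.neighborFinset_eq_filter, sum_filter_of_ne fun w _ hw => (hzero w x hw).symm, hcol]
  refine ⟨Sym2.lift ⟨fun u v => (g u v + g v u) / 2, fun u v => by simp only [add_comm]⟩,
    fun e he => ?_, fun x => ?_⟩
  · induction e with
    | h u v =>
      have hadj : G.Adj u v := by simpa using he
      have h1 := hg1 u v
      have h2 := hg1 v u
      rw [if_pos hadj] at h1
      rw [if_pos hadj.symm] at h2
      simp only [Sym2.lift_mk]
      constructor <;> linarith [hg0 u v, hg0 v u]
  · rw [sum_incidenceFinset_eq_sum_neighborFinset]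
    simp only [Sym2.lift_mk, ← sum_div, sum_add_distrib, hrow', hcol']
    constructor <;> linarith

lemma dOut_eq_card_filter (S : Finset V) (v : V) :
    dOut G S v = #{u ∈ Sᶜ | G.Adj v u} := by
  rw [dOut]
  congr 1
  ext u
  simp [and_comm]

lemma sum_sub_dOut_le_sum_tset {S U : Finset V} (hSU : Disjoint S U) (b : ℕ) :
    ∑ v ∈ U, (b - dOut G S v) ≤ ∑ v ∈ Tset G (fun _ => b) S, (b - dOut G S v) := by
  rw [← sum_filter_of_ne (p := fun v => dOut G S v < b) fun v _ h => by omega]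
  refine sum_le_sum_of_subset fun v hv => ?_
  obtain ⟨hvU, hlt⟩ := mem_filter.1 hv
  exact mem_filter.2 ⟨mem_compl.2 (disjoint_right.1 hSU hvU), hlt⟩

/-- Gale's condition for the flow problem solved in `exists_isFracFactor_of_sum_eq`. -/
lemma sum_le_sum_min_card_of_forall_sum_sub_dOut_le {a b : ℕ} {q : V → ℕ}
    (hcrit : ∀ S, ∑ v ∈ Tset G (fun _ => b) S, (b - dOut G S v) ≤ a * #S)
    (hqa : ∀ v, a ≤ q v) (hqb : ∀ v, q v ≤ b) (T : Finset V) :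
    ∑ v ∈ T, q v ≤ ∑ u, min (q u) #{v ∈ T | G.Adj u v} := by
  set D : V → ℕ := fun u => #{v ∈ T | G.Adj u v}
  -- outside `T`, vertices with many neighbours in `T` play the role of `S` in `hcrit`
  set S := {u ∈ Tᶜ | a ≤ D u}
  set Z := {u ∈ Tᶜ | ¬ a ≤ D u}
  have hdOut : ∀ v, dOut G S v = D v + #{u ∈ Z | G.Adj v u} := fun v => by
    have hSc : Sᶜ = T ∪ Z := by
      ext u
      by_cases hu : u ∈ T <;> simp [S, Z, hu]
    have hTZ : Disjoint T Z := disjoint_compl_right.mono_right (filter_subset _ _)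
    rw [dOut_eq_card_filter, hSc, filter_union, card_union_of_disjoint
      (disjoint_filter_filter hTZ)]
  have hS : ∑ v ∈ T, (b - dOut G S v) ≤ ∑ u ∈ S, min (q u) (D u) := calc
    ∑ v ∈ T, (b - dOut G S v) ≤ ∑ v ∈ Tset G (fun _ => b) S, (b - dOut G S v) :=
      sum_sub_dOut_le_sum_tset G (disjoint_compl_left.mono_left (filter_subset _ _)) b
    _ ≤ a * #S := hcrit S
    _ = ∑ u ∈ S, a := by rw [sum_const, smul_eq_mul, mul_comm]
    _ ≤ ∑ u ∈ S, min (q u) (D u) := sum_le_sum fun u hu => le_min (hqa u) (mem_filter.1 hu).2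
  have hZ : ∑ v ∈ T, #{u ∈ Z | G.Adj v u} = ∑ u ∈ Z, min (q u) (D u) := calc
    ∑ v ∈ T, #{u ∈ Z | G.Adj v u} = ∑ u ∈ Z, #{v ∈ T | G.Adj v u} :=
      sum_card_bipartiteAbove_eq_sum_card_bipartiteBelow G.Adj
    _ = ∑ u ∈ Z, min (q u) (D u) := sum_congr rfl fun u hu => by
      have := (mem_filter.1 hu).2
      simp only [D, G.adj_comm u] at this ⊢
      have := hqa u
      omega
  have hT : ∑ v ∈ T, q v ≤ ∑ v ∈ T, min (q v) (D v) + ∑ v ∈ T, (b - dOut G S v) +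
      ∑ v ∈ T, #{u ∈ Z | G.Adj v u} := by
    simp only [← sum_add_distrib]
    refine sum_le_sum fun v _ => ?_
    have := hdOut v
    have := hqb v
    omega
  have hsplit : ∑ u, min (q u) (D u) = ∑ u ∈ T, min (q u) (D u) +
      (∑ u ∈ S, min (q u) (D u) + ∑ u ∈ Z, min (q u) (D u)) := by
    rw [← sum_add_sum_compl T, ← sum_filter_add_sum_filter_not Tᶜ (fun u => a ≤ D u)]
  rw [hsplit]
  omega

theorem hasAllFracFactors_of_forall_sum_sub_dOut_le {a b : ℕ}
    (hcrit : ∀ S, ∑ v ∈ Tset G (fun _ => b) S, (b - dOut G S v) ≤ a * #S) :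
    HasAllFracFactors G (fun _ => a) (fun _ => b) := by
  intro q hqa hqb
  have hgale : ∀ T : Finset V, ∑ v ∈ T, (q v : ℝ) ≤
      ∑ u, min (q u : ℝ) (∑ v ∈ T, if G.Adj u v then 1 else 0) := fun T => by
    simp only [sum_boole]
    exact_mod_cast sum_le_sum_min_card_of_forall_sum_sub_dOut_le G hcrit hqa hqb T
  obtain ⟨g, hg, hcol⟩ := exists_isFeasibleFlow_sum_eq_of_forall_sum_le
    (fun u v => by positivity) (fun u => by positivity) (fun v => by positivity) hgale
  have hrow : ∀ u, ∑ v, g u v = q u := by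
    refine (sum_eq_sum_iff_of_le fun u _ => hg.2.1 u).1 ?_ |> fun h u => h u (mem_univ u)
    rw [sum_comm, sum_congr rfl fun v _ => hcol v]
  exact exists_isFracFactor_of_sum_eq G q (fun u v => (hg.1 u v).1) (fun u v => (hg.1 u v).2)
    hrow hcol

end FractionalFactor

section NeighborhoodUnion

variable {V : Type*} [Fintype V] [DecidableEq V] (G : SimpleGraph V) [DecidableRel G.Adj]

lemma degree_le_dOut_add_card (S : Finset V) (v : V) : G.degree v ≤ dOut G S v + #S := by
  rw [← G.card_neighborFinset_eq_degree]
  exact card_le_card_sdiff_add_card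

lemma card_neighborFinset_union_le (S : Finset V) (u v : V) :
    #(G.neighborFinset u ∪ G.neighborFinset v) ≤ #S + dOut G S u + dOut G S v := calc
  #(G.neighborFinset u ∪ G.neighborFinset v)
    ≤ #((G.neighborFinset u ∪ G.neighborFinset v) \ S) + #S := card_le_card_sdiff_add_card
  _ ≤ dOut G S u + dOut G S v + #S := by
    rw [union_sdiff_distrib]
    exact Nat.add_le_add_right (card_union_le _ _) _
  _ = #S + dOut G S u + dOut G S v := by ring

lemma card_filter_eq_or_adj_le {S T : Finset V} (hST : Disjoint S T) (v₁ : V) :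
    #{v ∈ T | v = v₁ ∨ G.Adj v₁ v} ≤ dOut G S v₁ + 1 := calc
  #{v ∈ T | v = v₁ ∨ G.Adj v₁ v} ≤ #(insert v₁ (G.neighborFinset v₁ \ S)) := by
    refine card_le_card fun v hv => ?_
    obtain ⟨hvT, rfl | hadj⟩ := mem_filter.1 hv
    · exact mem_insert_self _ _
    · exact mem_insert_of_mem (mem_sdiff.2 ⟨by simpa using hadj, disjoint_right.1 hST hvT⟩)
  _ ≤ dOut G S v₁ + 1 := card_insert_le _ _

lemma cast_sum_tset_sub_dOut (b : ℕ) (S : Finset V) :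
    ((∑ v ∈ Tset G (fun _ => b) S, (b - dOut G S v) : ℕ) : ℝ) =
      ∑ v ∈ Tset G (fun _ => b) S, ((b : ℝ) - dOut G S v) := by
  push_cast
  refine sum_congr rfl fun v hv => ?_
  rw [Nat.cast_sub (mem_filter.1 hv).2.le]

theorem forall_sum_sub_dOut_le_of_neighborhood_union {a b : ℕ} (ha : 0 < a) (hab : a < b)
    (hn : (Fintype.card V : ℝ) ≥ 2 * ((a : ℝ) + b) * ((a : ℝ) + b - 1) / a)
    (hδ : (G.minDegree : ℝ) ≥ (((a : ℝ) + b - 1) ^ 2 + 4 * b) / (4 * a))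
    (hnb : ∀ u v : V, u ≠ v → ¬ G.Adj u v →
      (((G.neighborFinset u ∪ G.neighborFinset v).card : ℝ)) ≥
        (b : ℝ) * (Fintype.card V) / ((a : ℝ) + b))
    (S : Finset V) :
    ∑ v ∈ Tset G (fun _ => b) S, (b - dOut G S v) ≤ a * #S := by
  set T := Tset G (fun _ => b) S
  set d := dOut G S
  have hT : ∀ v ∈ T, v ∉ S ∧ d v < b := fun v hv => by simpa [T, Tset] using hv
  have hST : Disjoint S T := disjoint_right.2 fun v hv => (hT v hv).1
  by_contra! hcon
  have hdef : (a : ℝ) * #S + 1 ≤ ∑ v ∈ T, ((b : ℝ) - d v) := by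
    rw [← cast_sum_tset_sub_dOut]
    exact_mod_cast hcon
  have hTne : T.Nonempty := nonempty_of_sum_ne_zero fun h => by
    rw [h] at hdef
    nlinarith [Nat.cast_nonneg (α := ℝ) (#S)]
  obtain ⟨v₁, hv₁, hv₁min⟩ := exists_min_image T d hTne
  set K := {v ∈ T | v = v₁ ∨ G.Adj v₁ v}
  set W := {v ∈ T | ¬(v = v₁ ∨ G.Adj v₁ v)}
  have hsplit : ∑ v ∈ T, ((b : ℝ) - d v) = ∑ v ∈ K, ((b : ℝ) - d v) + ∑ v ∈ W, ((b : ℝ) - d v) :=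
    (sum_filter_add_sum_filter_not _ _ _).symm
  rw [hsplit] at hdef
  replace hdef := hdef.trans (add_le_add_left
    (sum_sub_le_card_mul_sub (U := K) b fun v hv => hv₁min v (mem_filter.1 hv).1) _)
  have hK : (#K : ℝ) ≤ d v₁ + 1 := by exact_mod_cast card_filter_eq_or_adj_le G hST v₁
  rcases W.eq_empty_or_nonempty with hW | hW
  · rw [hW, sum_empty, add_zero] at hdef
    have hδv₁ : (G.minDegree : ℝ) ≤ d v₁ + #S := by
      exact_mod_cast (G.minDegree_le_degree v₁).trans (degree_le_dOut_add_card G S v₁)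
    exact closedNbhd_case_arith (by exact_mod_cast ha) (by exact_mod_cast (hT v₁ hv₁).2.le) hδ
      hδv₁ hK hdef
  · obtain ⟨v₂, hv₂, hv₂min⟩ := exists_min_image W d hW
    obtain ⟨hv₂T, hv₂'⟩ := mem_filter.1 hv₂
    push Not at hv₂'
    have hkw : (#S : ℝ) + #K + #W ≤ Fintype.card V := by
      have : #K + #W = #T := card_filter_add_card_filter_not _
      have := (card_union_of_disjoint hST).symm.trans_le (card_le_univ (S ∪ T))
      exact_mod_cast (show #S + #K + #W ≤ Fintype.card V by omega)
    have hunion : (#S : ℝ) + d v₁ + d v₂ ≥ b * Fintype.card V / (a + b) :=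
      (hnb v₁ v₂ hv₂'.1.symm hv₂'.2).trans (by exact_mod_cast card_neighborFinset_union_le ..)
    refine two_vertex_case_arith (by exact_mod_cast ha) (by exact_mod_cast hab) ?_
      (by exact_mod_cast hv₁min v₂ hv₂T) (by exact_mod_cast (hT v₂ hv₂T).2) hn hunion hK
      (Nat.cast_nonneg _) hkw (hdef.trans (add_le_add_right (sum_sub_le_card_mul_sub b hv₂min) _))
    rcases (d v₁).eq_zero_or_pos with h | h
    · exact .inl (by exact_mod_cast h)
    · exact .inr (by exact_mod_cast h)

end NeighborhoodUnion

/-- **Theorem 7.** Let `a < b` be positive integers and `G` a graph of order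
`n ≥ 2(a+b)(a+b−1)/a` with `δ(G) ≥ ((a+b−1)² + 4b)/(4a)`. If
`|N_G(u) ∪ N_G(v)| ≥ bn/(a+b)` for every pair of nonadjacent vertices `u ≠ v`,
then `G` has all fractional `[a,b]`-factors. -/
theorem all_fractional_ab_factors_of_neighborhood_union {V : Type*} [Fintype V]
    [DecidableEq V] (G : SimpleGraph V) [DecidableRel G.Adj] (a b : ℕ)
    (ha : 0 < a) (hab : a < b)
    (hn : (Fintype.card V : ℝ) ≥ 2 * ((a : ℝ) + b) * ((a : ℝ) + b - 1) / a)
    (hδ : (G.minDegree : ℝ) ≥ (((a : ℝ) + b - 1) ^ 2 + 4 * b) / (4 * a))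
    (hnb : ∀ u v : V, u ≠ v → ¬ G.Adj u v →
      (((G.neighborFinset u ∪ G.neighborFinset v).card : ℝ)) ≥
        (b : ℝ) * (Fintype.card V) / ((a : ℝ) + b)) :
    HasAllFracFactors G (fun _ => a) (fun _ => b) :=
  hasAllFracFactors_of_forall_sum_sub_dOut_le G
    (forall_sum_sub_dOut_le_of_neighborhood_union G ha hab hn hδ hnb)
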